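/- ∀ℓ·φ is (up to logical equivalence) the logically weakest formula that is independent of the literal ¬ℓ and entails φ. -/

import Mathlib

variable {V : Type*} [Fintype V] [DecidableEq V]

/-- Flip the value of variable `x` in world `ω`. -/
def flipAt (ω : V → Bool) (x : V) : V → Bool := Function.update ω x (!(ω x))

/-- `ω` is an `ℓ`-boundary model of `φ`, where `ℓ` is the literal `(x, ω x)` contained in `ω`;
equivalently, `φ` has the b-rule whose antecedent is `ω` restricted away from `x` and whose
consequent is the literal `(x, ω x)`. -/
def HasBRule (φ : (V → Bool) → Prop) (ω : V → Bool) (x : V) : Prop :=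
  φ ω ∧ ¬ φ (flipAt ω x)

/-- The set of b-rules of `φ`, encoded as pairs `(ω, x)` where the antecedent is `ω` off `x`
and the consequent is the literal `(x, ω x)`. -/
def BRules (φ : (V → Bool) → Prop) : Set ((V → Bool) × V) :=
  {p | HasBRule φ p.1 p.2}

/-- `∀ℓ·φ := (ℓ ∨ φ|¬ℓ) ∧ (φ|ℓ)` for the literal `ℓ = (x, b)`. -/
def forallLit (φ : (V → Bool) → Prop) (x : V) (b : Bool) : (V → Bool) → Prop :=
  fun ω => (ω x = b ∨ φ (Function.update ω x (!b))) ∧ φ (Function.update ω x b)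

/-- `∃ℓ·φ := (φ|ℓ) ∨ (¬ℓ ∧ φ|¬ℓ)` for the literal `ℓ = (x, b)`. -/
def existsLit (φ : (V → Bool) → Prop) (x : V) (b : Bool) : (V → Bool) → Prop :=
  fun ω => φ (Function.update ω x b) ∨ (ω x = !b ∧ φ (Function.update ω x (!b)))

/-- `φ` is independent of the literal `(x, b)`: any model containing the literal stays a
model when that literal is flipped. -/
def IndepLit (φ : (V → Bool) → Prop) (x : V) (b : Bool) : Prop :=
  ∀ ω : V → Bool, ω x = b → φ ω → φ (Function.update ω x (!b))

/-- Successive universal literal quantification `∀ℓ₁,…,ℓₙ·φ`. -/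
def forallLits (φ : (V → Bool) → Prop) : List (V × Bool) → ((V → Bool) → Prop)
  | [] => φ
  | p :: L => forallLit (forallLits φ L) p.1 p.2

omit [Fintype V] in
theorem forallLit_iff {φ : (V → Bool) → Prop} {x : V} {b : Bool} {ω : V → Bool} :
    forallLit φ x b ω ↔ φ ω ∧ φ (Function.update ω x b) := by
  unfold forallLit
  rcases Bool.eq_or_eq_not (ω x) b with h | h
  · rw [← h, Function.update_eq_self]
    simp
  · rw [← h, Function.update_eq_self]
    simp [h]

omit [Fintype V] in
theorem indepLit_not_iff {ψ : (V → Bool) → Prop} {x : V} {b : Bool} :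
    IndepLit ψ x (!b) ↔ ∀ ω, ψ ω → ψ (Function.update ω x b) := by
  refine ⟨fun h ω hω => ?_, fun h ω _ => by simpa using h ω⟩
  rcases Bool.eq_or_eq_not (ω x) b with hx | hx
  · rwa [← hx, Function.update_eq_self]
  · simpa using h ω hx hω

omit [Fintype V] in
theorem indepLit_not_forallLit (φ : (V → Bool) → Prop) (x : V) (b : Bool) :
    IndepLit (forallLit φ x b) x (!b) := by
  refine indepLit_not_iff.2 fun ω hω => forallLit_iff.2 ?_
  obtain ⟨-, hφ⟩ := forallLit_iff.1 hω
  exact ⟨hφ, by rwa [Function.update_idem]⟩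

/-- `∀ℓ·φ` is the logically weakest formula that is independent of `¬ℓ` and entails `φ`
(for `ℓ = (x, b)`, so `¬ℓ = (x, !b)`). -/
theorem forallLit_weakest (φ : (V → Bool) → Prop) (x : V) (b : Bool) :
    IndepLit (forallLit φ x b) x (!b) ∧
    (∀ ω : V → Bool, forallLit φ x b ω → φ ω) ∧
    (∀ ψ : (V → Bool) → Prop, IndepLit ψ x (!b) → (∀ ω : V → Bool, ψ ω → φ ω) →
      ∀ ω : V → Bool, ψ ω → forallLit φ x b ω) := by
  refine ⟨indepLit_not_forallLit φ x b, fun ω hω => (forallLit_iff.1 hω).1, ?_⟩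
  intro ψ hψ hψφ ω hω
  exact forallLit_iff.2 ⟨hψφ ω hω, hψφ _ (indepLit_not_iff.1 hψ ω hω)⟩
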